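/- arXiv:2604.11577 — 5 statements merged into one kernel-verified Lean document; each statement's English description precedes it below -/
import Mathlib

section
/- Fix r > 1, λ > 0, and s ≥ 0, and let z ∈ (1, r] satisfy (1+s)·z^(λ+1) = r·z^λ + r·s. Then (λ+1)·(1+s)·z^λ − λ·r·z^(λ−1) > 0. -/
theorem partial_z_of_F_pos (r lam s z : ℝ) (hr : 1 < r) (hlam : 0 < lam) (hs : 0 ≤ s)
    (hz : z ∈ Set.Ioc 1 r)
    (hroot : (1 + s) * z ^ (lam + 1) = r * z ^ lam + r * s) :
    0 < (lam + 1) * (1 + s) * z ^ lam - lam * r * z ^ (lam - 1) := by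
  obtain ⟨hz1, hzr⟩ := hz
  have hz0 : (0 : ℝ) < z := lt_trans one_pos hz1
  have hB : 0 < z ^ (lam - 1) := Real.rpow_pos_of_pos hz0 _
  have h2 : z ^ lam = z ^ (lam - 1) * z := by
    rw [← Real.rpow_add_one hz0.ne' (lam - 1)]; ring_nf
  have h1 : z ^ (lam + 1) = z ^ (lam - 1) * z * z := by
    rw [← h2, Real.rpow_add_one hz0.ne' lam]
  rw [h1, h2] at hroot
  rw [h2]
  have key : ((lam + 1) * (1 + s) * (z ^ (lam - 1) * z) - lam * r * z ^ (lam - 1)) * z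
      = r * (z ^ (lam - 1) * z) + (lam + 1) * (r * s) := by
    linear_combination (lam + 1) * hroot
  have hrhs : 0 < r * (z ^ (lam - 1) * z) + (lam + 1) * (r * s) := by
    have : 0 < r * (z ^ (lam - 1) * z) := by positivity
    nlinarith [mul_nonneg (mul_nonneg hlam.le (by linarith : (0:ℝ) ≤ r)) hs]
  nlinarith [key, hz0]
end

section
/- Fix r > 1 and λ > 0. For s ≥ 0, let z(s) denote the unique solution in (1, r] of r·(z^(−1) + s·z^(−(λ+1))) = 1 + s (for s = 0 this solution is z(0) = r). Then z(s) → r^(1/(λ+1)) as s → ∞. -/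
theorem inner_root_limit (r lam : ℝ) (hr : 1 < r) (hlam : 0 < lam) (z : ℝ → ℝ)
    (hz : ∀ s : ℝ, 0 ≤ s → z s ∈ Set.Ioc 1 r ∧
      r * ((z s) ^ (-1 : ℝ) + s * (z s) ^ (-(lam + 1))) = 1 + s) :
    Filter.Tendsto z Filter.atTop (nhds (r ^ (1 / (lam + 1)))) := by
  have hr0 : (0:ℝ) < r := by linarith
  have hl0 : lam + 1 ≠ 0 := by positivity
  -- key limit: r * z s ^ (-(lam+1)) → 1
  have key : Filter.Tendsto (fun s => r * z s ^ (-(lam + 1) : ℝ))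
      Filter.atTop (nhds 1) := by
    have hlow : Filter.Tendsto (fun s : ℝ => 1 - (r - 1) / s) Filter.atTop (nhds 1) := by
      have h := (tendsto_const_div_atTop_nhds_zero_nat (r - 1)).comp
        Filter.tendsto_id
      have h2 : Filter.Tendsto (fun s : ℝ => (r - 1) / s) Filter.atTop (nhds 0) :=
        tendsto_const_nhds.div_atTop Filter.tendsto_id
      simpa using (tendsto_const_nhds.sub h2)
    apply tendsto_of_tendsto_of_tendsto_of_le_of_le' hlow tendsto_const_nhds
    · filter_upwards [Filter.eventually_ge_atTop (1:ℝ)] with s hs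
      have hs0 : (0:ℝ) < s := lt_of_lt_of_le one_pos hs
      obtain ⟨⟨h1, h2⟩, heq⟩ := hz s hs0.le
      have hzpos : 0 < z s := lt_trans one_pos h1
      rw [Real.rpow_neg_one] at heq
      have hB : r * (z s)⁻¹ ≤ r := by
        have : (z s)⁻¹ ≤ 1 := inv_le_one_of_one_le₀ h1.le
        nlinarith
      have hcancel : (r - 1) / s * s = r - 1 := div_mul_cancel₀ _ (ne_of_gt hs0)
      nlinarith [heq, hB, hcancel, hs0]
    · filter_upwards [Filter.eventually_ge_atTop (1:ℝ)] with s hs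
      have hs0 : (0:ℝ) < s := lt_of_lt_of_le one_pos hs
      obtain ⟨⟨h1, h2⟩, heq⟩ := hz s hs0.le
      have hzpos : 0 < z s := lt_trans one_pos h1
      rw [Real.rpow_neg_one] at heq
      have hB : 1 ≤ r * (z s)⁻¹ := by
        rw [← div_eq_mul_inv, le_div_iff₀ hzpos]
        simpa using h2
      nlinarith [heq, hB, hs0]
  -- transform
  have key2 : Filter.Tendsto (fun s => ((r * z s ^ (-(lam + 1) : ℝ)) / r) ^ (-(1 / (lam + 1)) : ℝ))
      Filter.atTop (nhds (((1:ℝ) / r) ^ (-(1 / (lam + 1)) : ℝ))) := by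
    apply Filter.Tendsto.rpow_const (key.div_const r)
    left
    positivity
  have heval : ((1:ℝ) / r) ^ (-(1 / (lam + 1)) : ℝ) = r ^ (1 / (lam + 1)) := by
    rw [one_div, Real.inv_rpow hr0.le, Real.rpow_neg hr0.le, inv_inv]
  rw [heval] at key2
  apply key2.congr'
  filter_upwards [Filter.eventually_ge_atTop (0:ℝ)] with s hs
  obtain ⟨⟨h1, h2⟩, heq⟩ := hz s hs
  have hzpos : 0 < z s := lt_trans one_pos h1
  rw [mul_div_cancel_left₀ _ (ne_of_gt hr0), ← Real.rpow_mul hzpos.le,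
    neg_mul_neg, mul_one_div, div_self hl0, Real.rpow_one]
end

section
/- Fix r > 1 and λ > 0, and for s ≥ 0 let z(s) ∈ (1, r] be the unique root of r·(z^(−1) + s·z^(−(λ+1))) = 1 + s. Then z is strictly decreasing in s: if 0 ≤ s₁ < s₂ then z(s₂) < z(s₁). -/
theorem inner_root_strictAnti (r lam : ℝ) (hr : 1 < r) (hlam : 0 < lam) (z : ℝ → ℝ)
    (hz : ∀ s : ℝ, 0 ≤ s → z s ∈ Set.Ioc 1 r ∧
      r * ((z s) ^ (-1 : ℝ) + s * (z s) ^ (-(lam + 1))) = 1 + s) :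
    ∀ s₁ s₂ : ℝ, 0 ≤ s₁ → s₁ < s₂ → z s₂ < z s₁ := by
  intro s₁ s₂ hs₁ hlt
  obtain ⟨⟨h1a, h1b⟩, he1⟩ := hz s₁ hs₁
  obtain ⟨⟨h2a, h2b⟩, he2⟩ := hz s₂ (hs₁.trans hlt.le)
  by_contra hcon
  push_neg at hcon
  have hz1pos : (0:ℝ) < z s₁ := one_pos.trans h1a
  have hz2pos : (0:ℝ) < z s₂ := one_pos.trans h2a
  have hrpos : (0:ℝ) < r := one_pos.trans hr
  have hv1u1 : (z s₁) ^ (-(lam+1)) < (z s₁) ^ (-1:ℝ) :=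
    Real.rpow_lt_rpow_of_exponent_lt h1a (by linarith)
  have key : r * (z s₁) ^ (-(lam+1)) < 1 := by
    by_contra hk
    push_neg at hk
    have h2 : 1 < r * (z s₁) ^ (-1:ℝ) :=
      lt_of_le_of_lt hk (mul_lt_mul_of_pos_left hv1u1 hrpos)
    nlinarith [mul_nonneg hs₁ (sub_nonneg.2 hk)]
  have hpow : (z s₁) ^ (lam+1) ≤ (z s₂) ^ (lam+1) :=
    Real.rpow_le_rpow hz1pos.le hcon (by linarith)
  have hv : (z s₂) ^ (-(lam+1)) ≤ (z s₁) ^ (-(lam+1)) := by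
    rw [Real.rpow_neg hz1pos.le, Real.rpow_neg hz2pos.le]
    exact inv_anti₀ (Real.rpow_pos_of_pos hz1pos _) hpow
  have hu : (z s₂) ^ (-1:ℝ) ≤ (z s₁) ^ (-1:ℝ) := by
    rw [Real.rpow_neg_one, Real.rpow_neg_one]
    exact inv_anti₀ hz1pos hcon
  have hs₂ : 0 ≤ s₂ := hs₁.trans hlt.le
  nlinarith [mul_nonneg hs₂ (sub_nonneg.2 hv),
    mul_pos (sub_pos.2 hlt) (sub_pos.2 key),
    mul_nonneg hrpos.le (sub_nonneg.2 hu)]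
end

section
/- Let p_i > 0 sum to 1, q_i > 0, and suppose positive reals W_i, c, ν, η ≥ 0, λ > 0, γ > 0 and an index set A satisfy: (p_i/q_i)·(W_i^(−γ) + η·λ·W_i^(−(λ+1))) = ν for i ∈ A; W_j = c and (p_j/q_j)·(c^(−γ) + η·λ·c^(−(λ+1))) ≤ ν for j ∉ A; and ∑_i p_i·(W_i^(−γ) + η·λ·W_i^(−(λ+1))) = ν. If A ≠ {1,…,n}, then ∑_{i∈A} q_i < 1, and setting τ_A := (1 − ∑_{i∈A} p_i)/(1 − ∑_{i∈A} q_i), one has: i ∈ A together with W_i > c implies p_i/q_i > τ_A, and j ∉ A implies p_j/q_j ≤ τ_A. -/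
theorem constrained_support_threshold (n : ℕ) (p q : Fin n → ℝ)
    (hp : ∀ i, 0 < p i) (hq : ∀ i, 0 < q i) (hpsum : ∑ i, p i = 1)
    (c ν η lam γ : ℝ) (hc : 0 < c) (hν : 0 < ν) (hη : 0 ≤ η)
    (hlam : 0 < lam) (hγ : 0 < γ)
    (A : Finset (Fin n)) (W : Fin n → ℝ)
    (hWA : ∀ i ∈ A, c < W i)
    (hWc : ∀ j ∉ A, W j = c)
    (hactive : ∀ i ∈ A, (p i / q i) * ((W i) ^ (-γ) + η * lam * (W i) ^ (-(lam + 1))) = ν)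
    (hinactive : ∀ j ∉ A, (p j / q j) * (c ^ (-γ) + η * lam * c ^ (-(lam + 1))) ≤ ν)
    (hcash : ∑ i, p i * ((W i) ^ (-γ) + η * lam * (W i) ^ (-(lam + 1))) = ν)
    (hA : A ≠ Finset.univ) :
    (∑ i ∈ A, q i < 1) ∧
    (∀ i ∈ A, c < W i → p i / q i > (1 - ∑ i ∈ A, p i) / (1 - ∑ i ∈ A, q i)) ∧
    (∀ j ∉ A, p j / q j ≤ (1 - ∑ i ∈ A, p i) / (1 - ∑ i ∈ A, q i)) := by
  set fc : ℝ := c ^ (-γ) + η * lam * c ^ (-(lam + 1)) with hfc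
  have hfc_pos : 0 < fc := by
    have h1 : (0:ℝ) < c ^ (-γ) := Real.rpow_pos_of_pos hc _
    have h2 : (0:ℝ) ≤ η * lam * c ^ (-(lam + 1)) := by positivity
    linarith
  -- key balance identity
  have hbal : fc * (1 - ∑ i ∈ A, p i) = ν * (1 - ∑ i ∈ A, q i) := by
    have hsplit := (Finset.sum_add_sum_compl A
      (fun i => p i * ((W i) ^ (-γ) + η * lam * (W i) ^ (-(lam + 1)))))
    rw [hcash] at hsplit
    have h1 : ∑ i ∈ A, p i * ((W i) ^ (-γ) + η * lam * (W i) ^ (-(lam + 1)))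
        = ν * ∑ i ∈ A, q i := by
      rw [Finset.mul_sum]
      refine Finset.sum_congr rfl fun i hi => ?_
      have := hactive i hi
      have hqi := (hq i).ne'
      field_simp at this ⊢
      linarith
    have h2 : ∑ i ∈ Aᶜ, p i * ((W i) ^ (-γ) + η * lam * (W i) ^ (-(lam + 1)))
        = fc * ∑ i ∈ Aᶜ, p i := by
      rw [Finset.mul_sum]
      refine Finset.sum_congr rfl fun i hi => ?_
      rw [hWc i (Finset.mem_compl.mp hi), hfc]; ring
    have h3 : ∑ i ∈ Aᶜ, p i = 1 - ∑ i ∈ A, p i := by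
      have := Finset.sum_add_sum_compl A p
      rw [hpsum] at this; linarith
    rw [h1, h2, h3] at hsplit
    ring_nf
    ring_nf at hsplit
    linarith
  -- 1 - ∑ p over A is positive
  obtain ⟨j0, hj0⟩ : ∃ j, j ∉ A := by
    by_contra h
    push_neg at h
    exact hA (Finset.eq_univ_iff_forall.mpr h)
  have hPpos : 0 < 1 - ∑ i ∈ A, p i := by
    have h3 : ∑ i ∈ Aᶜ, p i = 1 - ∑ i ∈ A, p i := by
      have := Finset.sum_add_sum_compl A p
      rw [hpsum] at this; linarith
    rw [← h3]
    exact Finset.sum_pos (fun i _ => hp i) ⟨j0, Finset.mem_compl.mpr hj0⟩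
  have hQpos : 0 < 1 - ∑ i ∈ A, q i := by
    nlinarith
  -- threshold equals ν / fc
  have hτ : (1 - ∑ i ∈ A, p i) / (1 - ∑ i ∈ A, q i) = ν / fc := by
    field_simp
    linarith [hbal]
  refine ⟨by linarith, ?_, ?_⟩
  · intro i hi hci
    rw [hτ]
    have hWi : 0 < W i := hc.trans hci
    have hfWi_pos : 0 < (W i) ^ (-γ) + η * lam * (W i) ^ (-(lam + 1)) := by
      have h1 : (0:ℝ) < (W i) ^ (-γ) := Real.rpow_pos_of_pos hWi _
      have h2 : (0:ℝ) ≤ η * lam * (W i) ^ (-(lam + 1)) := by positivity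
      linarith
    have hlt : (W i) ^ (-γ) + η * lam * (W i) ^ (-(lam + 1)) < fc := by
      have h1 : (W i) ^ (-γ) < c ^ (-γ) :=
        Real.rpow_lt_rpow_of_neg hc hci (by linarith)
      have h2 : (W i) ^ (-(lam + 1)) ≤ c ^ (-(lam + 1)) :=
        Real.rpow_le_rpow_of_nonpos hc hci.le (by linarith)
      have h3 : η * lam * (W i) ^ (-(lam + 1)) ≤ η * lam * c ^ (-(lam + 1)) := by
        have : (0:ℝ) ≤ η * lam := by positivity
        exact mul_le_mul_of_nonneg_left h2 this
      rw [hfc]; linarith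
    have heq : p i / q i = ν / ((W i) ^ (-γ) + η * lam * (W i) ^ (-(lam + 1))) := by
      have := hactive i hi
      field_simp at this ⊢
      linarith
    rw [heq]
    exact div_lt_div_of_pos_left hν hfWi_pos hlt
  · intro j hj
    rw [hτ]
    have := hinactive j hj
    rw [le_div_iff₀ hfc_pos]
    linarith [this]
end

section
/- With the setup of the previous context (nonempty finite A, P, Q < 1, τ = (1−P)/(1−Q), r_i > 1, λ > 0, C = (1−Q) + ∑_{i∈A} q_i·r_i^(1/(λ+1))), one has τ·C^(λ+1) < 1. -/
/-!
The map `t ↦ t ^ (λ + 1)` is strictly convex, so strict Jensen for the weights `1 - Q` and `q i`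
at the points `1` and `r i ^ (1 / (λ + 1))` (not all equal, as `r i > 1`) bounds `C ^ (λ + 1)`
strictly by `(1 - Q) + ∑ q i * r i`, which equals `1 / τ`.
-/

open Finset

section

variable {𝕜 E β ι : Type*}

theorem StrictConvexOn.map_smul_add_sum_lt [Field 𝕜] [LinearOrder 𝕜] [IsStrictOrderedRing 𝕜]
    [AddCommGroup E] [AddCommGroup β] [PartialOrder β] [IsOrderedAddMonoid β] [Module 𝕜 E]
    [Module 𝕜 β] [IsStrictOrderedModule 𝕜 β] {s : Set E} {f : E → β} (hf : StrictConvexOn 𝕜 s f)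
    {t : Finset ι} {w₀ : 𝕜} {w : ι → 𝕜} {a : E} {x : ι → E} (hw₀ : 0 < w₀)
    (hw : ∀ i ∈ t, 0 < w i) (hsum : w₀ + ∑ i ∈ t, w i = 1) (ha : a ∈ s)
    (hx : ∀ i ∈ t, x i ∈ s) (hne : ∃ i ∈ t, x i ≠ a) :
    f (w₀ • a + ∑ i ∈ t, w i • x i) < w₀ • f a + ∑ i ∈ t, w i • f (x i) := by
  obtain ⟨i, hi, hxi⟩ := hne
  simpa using hf.map_sum_lt (t := insertNone t) (w := fun o ↦ o.elim w₀ w)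
    (p := fun o ↦ o.elim a x) (by simpa [Option.forall] using ⟨hw₀, hw⟩) (by simpa using hsum)
    (by simpa [Option.forall] using ⟨ha, hx⟩) ⟨some i, by simpa using hi, none, by simp, hxi⟩

theorem one_sub_sum_add_sum_mul_eq_inv {t : Finset ι} {p q r : ι → ℝ} {τ : ℝ}
    (hq : ∀ i ∈ t, q i ≠ 0) (hP : ∑ i ∈ t, p i ≠ 1) (hQ : ∑ i ∈ t, q i ≠ 1)
    (hτ : τ = (1 - ∑ i ∈ t, p i) / (1 - ∑ i ∈ t, q i)) (hr : ∀ i ∈ t, r i = p i / q i / τ) :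
    (1 - ∑ i ∈ t, q i) + ∑ i ∈ t, q i * r i = τ⁻¹ := by
  have hqr : ∑ i ∈ t, q i * r i = (∑ i ∈ t, p i) / τ := by
    rw [sum_div]
    refine sum_congr rfl fun i hi ↦ ?_
    rw [hr i hi]
    field_simp [hq i hi]
  have hP' : 1 - ∑ i ∈ t, p i ≠ 0 := sub_ne_zero.mpr hP.symm
  have hQ' : 1 - ∑ i ∈ t, q i ≠ 0 := sub_ne_zero.mpr hQ.symm
  rw [hqr, hτ]
  field_simp
  ring

end

theorem limit_risk_strictly_below_one_general (ι : Type*) (A : Finset ι) (hA : A.Nonempty)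
    (p q r : ι → ℝ) (hq : ∀ i ∈ A, 0 < q i)
    (hP : ∑ i ∈ A, p i < 1) (hQ : ∑ i ∈ A, q i < 1)
    (τ : ℝ) (hτ : τ = (1 - ∑ i ∈ A, p i) / (1 - ∑ i ∈ A, q i))
    (hr : ∀ i ∈ A, r i = (p i / q i) / τ) (hr1 : ∀ i ∈ A, 1 < r i)
    (lam : ℝ) (hlam : 0 < lam) :
    τ * ((1 - ∑ i ∈ A, q i) + ∑ i ∈ A, q i * (r i) ^ (1 / (lam + 1))) ^ (lam + 1) < 1 := by
  have hτ0 : 0 < τ := hτ ▸ div_pos (by linarith) (by linarith)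
  have hr0 : ∀ i ∈ A, 0 ≤ r i := fun i hi ↦ (zero_lt_one.trans (hr1 i hi)).le
  obtain ⟨i₀, hi₀⟩ := hA
  have hroot : 1 < r i₀ ^ (1 / (lam + 1)) :=
    Real.one_lt_rpow (hr1 i₀ hi₀) (by positivity)
  have hjensen := (strictConvexOn_rpow (by linarith : (1 : ℝ) < lam + 1)).map_smul_add_sum_lt
    (sub_pos.mpr hQ) hq (sub_add_cancel 1 _) (a := 1) (Set.mem_Ici.mpr zero_le_one)
    (fun i hi ↦ Set.mem_Ici.mpr (Real.rpow_nonneg (hr0 i hi) _)) ⟨i₀, hi₀, hroot.ne'⟩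
  have hpow : ∑ i ∈ A, q i * (r i ^ (1 / (lam + 1))) ^ (lam + 1) = ∑ i ∈ A, q i * r i :=
    sum_congr rfl fun i hi ↦ by rw [one_div, Real.rpow_inv_rpow (hr0 i hi) (by positivity)]
  simp only [smul_eq_mul, mul_one, Real.one_rpow] at hjensen
  rw [hpow, one_sub_sum_add_sum_mul_eq_inv (fun i hi ↦ (hq i hi).ne') hP.ne hQ.ne hτ hr]
    at hjensen
  calc _ < τ * τ⁻¹ := mul_lt_mul_of_pos_left hjensen hτ0
    _ = 1 := mul_inv_cancel₀ hτ0.ne'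

theorem limit_risk_strictly_below_one (ι : Type*) (A : Finset ι) (hA : A.Nonempty)
    (p q r : ι → ℝ) (hp : ∀ i ∈ A, 0 < p i) (hq : ∀ i ∈ A, 0 < q i)
    (hP : ∑ i ∈ A, p i < 1) (hQ : ∑ i ∈ A, q i < 1)
    (τ : ℝ) (hτ : τ = (1 - ∑ i ∈ A, p i) / (1 - ∑ i ∈ A, q i))
    (hr : ∀ i ∈ A, r i = (p i / q i) / τ) (hr1 : ∀ i ∈ A, 1 < r i)
    (lam : ℝ) (hlam : 0 < lam) :
    τ * ((1 - ∑ i ∈ A, q i) + ∑ i ∈ A, q i * (r i) ^ (1 / (lam + 1))) ^ (lam + 1) < 1 :=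
  limit_risk_strictly_below_one_general ι A hA p q r hq hP hQ τ hτ hr hr1 lam hlam
end
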